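/- arXiv:1611.08716 — 6 statements merged into one kernel-verified Lean document; each statement's English description precedes it below -/
import Mathlib

section
/- Let A, B : ℂ^n × ℂ^n → ℂ be bilinear forms. There exists a homeomorphism φ : ℂ^n → ℂ^n such that A(u,v) = B(φ u, φ v) for all u, v ∈ ℂ^n if and only if there exists a linear bijection ψ : ℂ^n → ℂ^n such that A(u,v) = B(ψ u, ψ v) for all u, v ∈ ℂ^n. -/
/-!
Let `N` be the radical of `B`. If `φ` is a surjection with `A u v = B (φ u) (φ v)`, then
`φ (u + v)` and `φ u + φ v` pair identically with every vector `φ w`, hence with every vector, so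
they differ by an element of `N`; likewise for `φ (c • u)` and `c • φ u`. Thus `u ↦ φ u mod N` is
a linear surjection onto `ℂⁿ ⧸ N`, which lifts to a linear automorphism `ψ` of `ℂⁿ`; since `B`
only sees its arguments modulo `N`, `B (ψ u) (ψ v) = B (φ u) (φ v) = A u v`.
-/

open Function Module

namespace Submodule

variable {K E F : Type*} [Field K] [AddCommGroup E] [Module K E] [AddCommGroup F] [Module K F]
  [FiniteDimensional K E] [FiniteDimensional K F]

/-- `ψ` is a section of `L` plus an isomorphism `ker L ≃ N` (the dimensions agree) composed with
a projection onto `ker L`. -/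
theorem exists_linearEquiv_mkQ_comp_eq (hdim : finrank K E = finrank K F) (N : Submodule K F)
    (L : E →ₗ[K] F ⧸ N) (hL : Surjective L) : ∃ ψ : E ≃ₗ[K] F, N.mkQ ∘ₗ ψ.toLinearMap = L := by
  obtain ⟨s, hs⟩ := N.mkQ.exists_rightInverse_of_surjective N.range_mkQ
  have hker : finrank K (LinearMap.ker L) = finrank K N := by
    have := L.finrank_range_add_finrank_ker
    rw [LinearMap.range_eq_top.2 hL, finrank_top] at this
    have := N.finrank_quotient_add_finrank
    omega
  let θ := LinearEquiv.ofFinrankEq _ _ hker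
  obtain ⟨W, hW⟩ := (LinearMap.ker L).exists_isCompl
  let ψ := s ∘ₗ L + N.subtype ∘ₗ θ.toLinearMap ∘ₗ (LinearMap.ker L).projectionOnto W hW
  have hψ : N.mkQ ∘ₗ ψ = L := by
    ext u
    have hsu : Quotient.mk (p := N) (s (L u)) = L u := LinearMap.congr_fun hs (L u)
    simp [ψ, hsu, (Quotient.mk_eq_zero N).2 (θ _).2]
  have hinj : Injective ψ := by
    rw [← LinearMap.ker_eq_bot, eq_bot_iff]
    intro x hx
    have hxL : x ∈ LinearMap.ker L := by
      rw [LinearMap.mem_ker, ← hψ, LinearMap.comp_apply, LinearMap.mem_ker.1 hx, map_zero]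
    have hθ : θ ((LinearMap.ker L).projectionOnto W hW x) = 0 := by
      simpa [ψ, LinearMap.mem_ker.1 hxL] using hx
    rw [θ.map_eq_zero_iff, ← coe_mk x hxL, projectionOnto_apply_left] at hθ
    simpa using congrArg Subtype.val hθ
  have hbij : Bijective ψ :=
    ⟨hinj, (LinearMap.injective_iff_surjective_of_finrank_eq_finrank hdim).1 hinj⟩
  exact ⟨.ofBijective ψ hbij, hψ⟩

end Submodule

namespace LinearMap.BilinForm

variable {K E F : Type*} [Field K] [AddCommGroup F] [Module K F]

def radical (B : LinearMap.BilinForm K F) : Submodule K F := ker B ⊓ ker B.flip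

variable {B : LinearMap.BilinForm K F}

theorem mem_radical_iff {x : F} : x ∈ B.radical ↔ (∀ w, B x w = 0) ∧ ∀ w, B w x = 0 := by
  simp [radical, LinearMap.ext_iff]

theorem apply_eq_of_sub_mem_radical {x x' y y' : F} (hx : x - x' ∈ B.radical)
    (hy : y - y' ∈ B.radical) : B x y = B x' y' := by
  have hx0 := (mem_radical_iff.1 hx).1 y
  have hy0 := (mem_radical_iff.1 hy).2 x'
  simp only [map_sub, LinearMap.sub_apply, sub_eq_zero] at hx0 hy0
  rw [hx0, hy0]

theorem sub_mem_radical_of_surjective {φ : E → F} (hφ : Surjective φ) {x x' : F}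
    (hl : ∀ w, B x (φ w) = B x' (φ w)) (hr : ∀ w, B (φ w) x = B (φ w) x') :
    x - x' ∈ B.radical := by
  refine mem_radical_iff.2 ⟨fun w ↦ ?_, fun w ↦ ?_⟩ <;> obtain ⟨w, rfl⟩ := hφ w
  · simp [hl]
  · simp [hr]

variable [AddCommGroup E] [Module K E] {A : LinearMap.BilinForm K E} {φ : E → F}

def linearModRadical (hφ : Surjective φ) (hAB : ∀ u v, A u v = B (φ u) (φ v)) :
    E →ₗ[K] F ⧸ B.radical where
  toFun u := B.radical.mkQ (φ u)
  map_add' u v := by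
    refine (Submodule.Quotient.eq _).2 (sub_mem_radical_of_surjective hφ (fun w ↦ ?_) fun w ↦ ?_)
    · simp [← hAB]
    · simp [← hAB]
  map_smul' c u := by
    refine (Submodule.Quotient.eq _).2 (sub_mem_radical_of_surjective hφ (fun w ↦ ?_) fun w ↦ ?_)
    · simp [← hAB]
    · simp [← hAB]

theorem surjective_linearModRadical (hφ : Surjective φ) (hAB : ∀ u v, A u v = B (φ u) (φ v)) :
    Surjective (linearModRadical hφ hAB) :=
  B.radical.mkQ_surjective.comp hφ

theorem exists_linearEquiv_of_surjective [FiniteDimensional K E] [FiniteDimensional K F]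
    (hdim : finrank K E = finrank K F) (hφ : Surjective φ) (hAB : ∀ u v, A u v = B (φ u) (φ v)) :
    ∃ ψ : E ≃ₗ[K] F, ∀ u v, A u v = B (ψ u) (ψ v) := by
  obtain ⟨ψ, hψ⟩ := B.radical.exists_linearEquiv_mkQ_comp_eq hdim _
    (surjective_linearModRadical hφ hAB)
  have hψφ (u : E) : ψ u - φ u ∈ B.radical :=
    (Submodule.Quotient.eq _).1 (LinearMap.congr_fun hψ u)
  exact ⟨ψ, fun u v ↦ (hAB u v).trans (apply_eq_of_sub_mem_radical (hψφ u) (hψφ v)).symm⟩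

end LinearMap.BilinForm

/-- Two bilinear forms `A, B : ℂ^n × ℂ^n → ℂ` are topologically equivalent
(via a homeomorphism `φ`) if and only if they are equivalent
(via a linear bijection `ψ`). -/
theorem stmt_1 (n : ℕ)
    (A B : (Fin n → ℂ) →ₗ[ℂ] (Fin n → ℂ) →ₗ[ℂ] ℂ) :
    (∃ φ : (Fin n → ℂ) ≃ₜ (Fin n → ℂ), ∀ u v, A u v = B (φ u) (φ v)) ↔
    (∃ ψ : (Fin n → ℂ) ≃ₗ[ℂ] (Fin n → ℂ), ∀ u v, A u v = B (ψ u) (ψ v)) := by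
  constructor
  · rintro ⟨φ, hφ⟩
    exact LinearMap.BilinForm.exists_linearEquiv_of_surjective rfl φ.surjective hφ
  · rintro ⟨ψ, hψ⟩
    exact ⟨ψ.toContinuousLinearEquiv.toHomeomorph, hψ⟩
end

section
/- Let A, B : ℂ^n × ℂ^n → ℂ be sesquilinear forms (linear in the first argument and conjugate-linear in the second). There exists a homeomorphism φ : ℂ^n → ℂ^n such that A(u,v) = B(φ u, φ v) for all u, v ∈ ℂ^n if and only if there exists a linear bijection ψ : ℂ^n → ℂ^n such that A(u,v) = B(ψ u, ψ v) for all u, v ∈ ℂ^n. -/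
/-!
Since `B (φ x) w = A x (φ⁻¹ w)` and `B w (φ x) = A (φ⁻¹ w) x`, the map sending `x` to the pair of slices `B (φ x) ·`, `B · (φ x)`
is linear in `x`, and its range is the range of the (linear) slice map of `B`. Two linear maps
on a finite-dimensional space with the same range differ by a linear automorphism `ψ`, so `ψ x`
has the same slices as `φ x` for every `x`, and then `B (φ u) (φ v) = B (ψ u) (ψ v)`.
-/

open Submodule

namespace LinearMap

theorem exists_linearEquiv_comp_eq_of_range_eq {K V W : Type*} [Field K]
    [AddCommGroup V] [Module K V] [FiniteDimensional K V] [AddCommGroup W] [Module K W]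
    {f g : V →ₗ[K] W} (h : range f = range g) : ∃ e : V ≃ₗ[K] V, g ∘ₗ e = f := by
  obtain ⟨C, hC⟩ := (ker f).exists_isCompl
  obtain ⟨θ⟩ : Nonempty (ker f ≃ₗ[K] ker g) := by
    refine FiniteDimensional.nonempty_linearEquiv_of_finrank_eq ?_
    have hf := f.finrank_range_add_finrank_ker
    have hg := g.finrank_range_add_finrank_ker
    rw [h] at hf
    omega
  obtain ⟨l, hl⟩ : ∃ l : V →ₗ[K] V, g ∘ₗ l = f := by
    obtain ⟨l, hl⟩ := Module.projective_lifting_property g.rangeRestrict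
      (f.codRestrict (range g) fun x => h ▸ mem_range_self f x) g.surjective_rangeRestrict
    exact ⟨l, by simpa using congrArg ((range g).subtype ∘ₗ ·) hl⟩
  set e := ofIsCompl hC ((ker g).subtype ∘ₗ θ.toLinearMap) (l ∘ₗ C.subtype)
  have hge : g ∘ₗ e = f := by
    ext x
    obtain ⟨k, c, rfl, -⟩ := existsUnique_add_of_isCompl hC x
    have hlc := LinearMap.congr_fun hl c
    simp only [comp_apply] at hlc
    simp [e, hlc, mem_ker.mp k.2, mem_ker.mp (θ k).2]
  have he : Function.Injective e := by
    refine (injective_iff_map_eq_zero e).mpr fun x hx => ?_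
    have hxf : x ∈ ker f := by simp [mem_ker, ← hge, hx]
    have hθ : ((θ ⟨x, hxf⟩ : ker g) : V) = 0 := by
      rw [← hx]
      exact (ofIsCompl_apply_left hC (φ := (ker g).subtype ∘ₗ θ.toLinearMap) ⟨x, hxf⟩).symm
    simpa using hθ
  exact ⟨LinearEquiv.ofInjectiveEndo e he, hge⟩

variable {K V : Type*} [Field K] [StarRing K] [AddCommGroup V] [Module K V]

-- The `star` makes the right slice linear rather than conjugate-linear in `y`.
def sesqSlices (B : V →ₗ[K] V →ₛₗ[starRingEnd K] K) : V →ₗ[K] (V → K) × (V → K) where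
  toFun y := (fun v => B y v, fun v => star (B v y))
  map_add' x y := by ext v <;> simp
  map_smul' c x := by ext v <;> simp [starRingEnd_apply]

theorem sesqSlices_eq_iff {B : V →ₗ[K] V →ₛₗ[starRingEnd K] K} {x y : V} :
    sesqSlices B x = sesqSlices B y ↔ (∀ v, B x v = B y v) ∧ ∀ v, B v x = B v y := by
  simp [sesqSlices, funext_iff]

theorem exists_linearEquiv_of_equiv [FiniteDimensional K V]
    {A B : V →ₗ[K] V →ₛₗ[starRingEnd K] K} (φ : V ≃ V) (h : ∀ u v, A u v = B (φ u) (φ v)) :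
    ∃ ψ : V ≃ₗ[K] V, ∀ u v, A u v = B (ψ u) (ψ v) := by
  set T := (funLeft K K φ.symm).prodMap (funLeft K K φ.symm) ∘ₗ sesqSlices A
  have hT : ∀ x, T x = sesqSlices B (φ x) := by
    intro x
    ext v <;> simp [T, sesqSlices, h]
  have hrange : range T = range (sesqSlices B) := by
    refine SetLike.coe_injective ?_
    rw [coe_range, coe_range, ← φ.surjective.range_comp (sesqSlices B)]
    exact congrArg Set.range (funext hT)
  obtain ⟨ψ, hψ⟩ := exists_linearEquiv_comp_eq_of_range_eq hrange
  have hslices : ∀ x, (∀ w, B (ψ x) w = B (φ x) w) ∧ ∀ w, B w (ψ x) = B w (φ x) :=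
    fun x => sesqSlices_eq_iff.mp ((LinearMap.congr_fun hψ x).trans (hT x))
  exact ⟨ψ, fun u v => by rw [h, ← (hslices v).2, ← (hslices u).1]⟩

end LinearMap

/-- Two sesquilinear forms `A, B : ℂ^n × ℂ^n → ℂ` (linear in the first argument,
conjugate-linear in the second) are topologically equivalent (via a homeomorphism `φ`)
if and only if they are equivalent (via a linear bijection `ψ`). -/
theorem stmt_2 (n : ℕ)
    (A B : (Fin n → ℂ) →ₗ[ℂ] (Fin n → ℂ) →ₛₗ[starRingEnd ℂ] ℂ) :
    (∃ φ : (Fin n → ℂ) ≃ₜ (Fin n → ℂ), ∀ u v, A u v = B (φ u) (φ v)) ↔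
    (∃ ψ : (Fin n → ℂ) ≃ₗ[ℂ] (Fin n → ℂ), ∀ u v, A u v = B (ψ u) (ψ v)) :=
  ⟨fun ⟨φ, h⟩ => LinearMap.exists_linearEquiv_of_equiv φ.toEquiv h,
    fun ⟨ψ, h⟩ => ⟨ψ.toContinuousLinearEquiv.toHomeomorph, h⟩⟩
end

section
/- Let A : ℂ^p × ℂ^q → ℂ and B : ℂ^p × ℂ^q → ℂ be bilinear forms. There exist homeomorphisms φ₁ : ℂ^p → ℂ^p and φ₂ : ℂ^q → ℂ^q such that A(u,v) = B(φ₁ u, φ₂ v) for all u ∈ ℂ^p, v ∈ ℂ^q, if and only if there exist linear bijections ψ₁ : ℂ^p → ℂ^p and ψ₂ : ℂ^q → ℂ^q such that A(u,v) = B(ψ₁ u, ψ₂ v) for all u ∈ ℂ^p, v ∈ ℂ^q. -/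
/-!
A bilinear form `f : U →ₗ V →ₗ K` on finite-dimensional spaces is determined up to linear
changes of variables by the dimension of `range f ⊆ Dual K V`: two maps `U → Dual K V` of equal
rank differ by automorphisms of source and target, and every automorphism of `Dual K V` is the
transpose of one of `V`. The rank survives arbitrary surjective changes of variables
`f u v = g (φ₁ u) (φ₂ v)`, because precomposition `c ↦ c ∘ φ₂` is linear and injective even
when `φ₂` is not linear, and carries `range g` onto `range f` inside the space of all functions
`V → K`.
-/

open Module Submodule

namespace LinearMap

theorem finrank_range_eq_of_surjective_of_apply_eq {R U U' V V' : Type*} [CommRing R]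
    [AddCommGroup U] [Module R U] [AddCommGroup U'] [Module R U']
    [AddCommGroup V] [Module R V] [AddCommGroup V'] [Module R V']
    (f : U →ₗ[R] V →ₗ[R] R) (g : U' →ₗ[R] V' →ₗ[R] R) {φ₁ : U → U'} {φ₂ : V → V'}
    (hφ₁ : Function.Surjective φ₁) (hφ₂ : Function.Surjective φ₂)
    (h : ∀ u v, f u v = g (φ₁ u) (φ₂ v)) :
    finrank R (range f) = finrank R (range g) := by
  let ι : (V →ₗ[R] R) →ₗ[R] V → R := ltoFun R V R R
  let L : (V' →ₗ[R] R) →ₗ[R] V → R := funLeft R R φ₂ ∘ₗ ltoFun R V' R R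
  have hι : Function.Injective ι := DFunLike.coe_injective
  have hL : Function.Injective L :=
    (funLeft_injective_of_surjective R R φ₂ hφ₂).comp DFunLike.coe_injective
  have key : (range f).map ι = (range g).map L := by
    rw [← range_comp, ← range_comp]
    ext x
    have hfg : ∀ u, ι (f u) = L (g (φ₁ u)) := fun u => funext (h u)
    simp only [mem_range, hφ₁.exists, comp_apply, hfg]
  calc finrank R (range f) = finrank R ((range f).map ι) :=
        ((range f).equivMapOfInjective ι hι).finrank_eq
    _ = finrank R ((range g).map L) := by rw [key]
    _ = finrank R (range g) := ((range g).equivMapOfInjective L hL).finrank_eq.symm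

theorem exists_linearEquiv_apply_eq_of_range_eq {K U V : Type*} [Field K]
    [AddCommGroup U] [Module K U] [AddCommGroup V] [Module K V] [FiniteDimensional K U]
    {f g : U →ₗ[K] V} (h : range f = range g) :
    ∃ e : U ≃ₗ[K] U, ∀ u, f u = g (e u) := by
  obtain ⟨Cf, hCf⟩ := (ker f).exists_isCompl
  obtain ⟨Cg, hCg⟩ := (ker g).exists_isCompl
  have hker : finrank K (ker f) = finrank K (ker g) := by
    have := finrank_range_add_finrank_ker f
    have := finrank_range_add_finrank_ker g
    rw [h] at *
    omega
  let σf : Cf ≃ₗ[K] range f := (quotientEquivOfIsCompl _ _ hCf).symm ≪≫ₗ f.quotKerEquivRange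
  let σg : Cg ≃ₗ[K] range g := (quotientEquivOfIsCompl _ _ hCg).symm ≪≫ₗ g.quotKerEquivRange
  let e : U ≃ₗ[K] U := (prodEquivOfIsCompl _ _ hCf).symm ≪≫ₗ
    (LinearEquiv.ofFinrankEq _ _ hker).prodCongr (σf ≪≫ₗ LinearEquiv.ofEq _ _ h ≪≫ₗ σg.symm) ≪≫ₗ
    prodEquivOfIsCompl _ _ hCg
  refine ⟨e, fun u => ?_⟩
  obtain ⟨⟨k, c⟩, rfl⟩ := (prodEquivOfIsCompl _ _ hCf).surjective u
  have hσg : ∀ y, g (σg.symm y) = y := fun y => congrArg Subtype.val (σg.apply_symm_apply y)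
  simp only [e, LinearEquiv.trans_apply, prodEquivOfIsCompl_symm_apply, coe_prodEquivOfIsCompl',
    projectionOnto_apply_left, projectionOnto_apply_right, LinearEquiv.prodCongr_apply, map_add,
    map_coe_ker, map_zero, ZeroMemClass.coe_zero, zero_add]
  rw [hσg]
  rfl

theorem exists_linearEquiv_apply_eq_of_finrank_range_eq {K U V : Type*} [Field K]
    [AddCommGroup U] [Module K U] [AddCommGroup V] [Module K V]
    [FiniteDimensional K U] [FiniteDimensional K V] {f g : U →ₗ[K] V}
    (h : finrank K (range f) = finrank K (range g)) :
    ∃ (e₁ : U ≃ₗ[K] U) (e₂ : V ≃ₗ[K] V), ∀ u, f u = e₂ (g (e₁ u)) := by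
  let ρ : range g ≃ₗ[K] range f := LinearEquiv.ofFinrankEq _ _ h.symm
  obtain ⟨e₂, he₂⟩ := (range g).exists_linearEquiv_restrict_eq ρ
  have hcomp : e₂.toLinearMap ∘ₗ (range g).subtype = (range f).subtype ∘ₗ ρ.toLinearMap :=
    ext fun x => (he₂ x).symm
  have hrange : range f = range (e₂.toLinearMap ∘ₗ g) :=
    calc range f = range ((range f).subtype ∘ₗ ρ.toLinearMap) := by
          rw [range_comp_of_range_eq_top _ ρ.range, range_subtype]
      _ = range (e₂.toLinearMap ∘ₗ g) := by rw [← hcomp, range_comp, range_subtype, range_comp]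
  obtain ⟨e₁, he₁⟩ := exists_linearEquiv_apply_eq_of_range_eq hrange
  exact ⟨e₁, e₂, he₁⟩

end LinearMap

theorem LinearEquiv.exists_dualMap_eq {R M : Type*} [CommRing R] [AddCommGroup M] [Module R M]
    [IsReflexive R M] (e : Dual R M ≃ₗ[R] Dual R M) :
    ∃ ψ : M ≃ₗ[R] M, ψ.dualMap = e := by
  refine ⟨evalEquiv R M ≪≫ₗ e.dualMap ≪≫ₗ (evalEquiv R M).symm, ?_⟩
  ext c v
  simp

theorem LinearMap.exists_linearEquiv_apply_apply_eq_of_finrank_range_eq {K U V : Type*} [Field K]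
    [AddCommGroup U] [Module K U] [AddCommGroup V] [Module K V]
    [FiniteDimensional K U] [FiniteDimensional K V] {f g : U →ₗ[K] V →ₗ[K] K}
    (h : finrank K (range f) = finrank K (range g)) :
    ∃ (ψ₁ : U ≃ₗ[K] U) (ψ₂ : V ≃ₗ[K] V), ∀ u v, f u v = g (ψ₁ u) (ψ₂ v) := by
  obtain ⟨ψ₁, e, he⟩ := exists_linearEquiv_apply_eq_of_finrank_range_eq h
  obtain ⟨ψ₂, rfl⟩ := LinearEquiv.exists_dualMap_eq e
  exact ⟨ψ₁, ψ₂, fun u v => by rw [he]; rfl⟩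

/-- For bilinear forms `A, B : ℂ^p × ℂ^q → ℂ`: there exist homeomorphisms
`φ₁ : ℂ^p → ℂ^p`, `φ₂ : ℂ^q → ℂ^q` transforming `A` into `B` if and only if
there exist linear bijections `ψ₁, ψ₂` doing the same. -/
theorem stmt_3 (p q : ℕ)
    (A B : (Fin p → ℂ) →ₗ[ℂ] (Fin q → ℂ) →ₗ[ℂ] ℂ) :
    (∃ (φ₁ : (Fin p → ℂ) ≃ₜ (Fin p → ℂ)) (φ₂ : (Fin q → ℂ) ≃ₜ (Fin q → ℂ)),
        ∀ u v, A u v = B (φ₁ u) (φ₂ v)) ↔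
    (∃ (ψ₁ : (Fin p → ℂ) ≃ₗ[ℂ] (Fin p → ℂ)) (ψ₂ : (Fin q → ℂ) ≃ₗ[ℂ] (Fin q → ℂ)),
        ∀ u v, A u v = B (ψ₁ u) (ψ₂ v)) := by
  constructor
  · rintro ⟨φ₁, φ₂, hφ⟩
    exact LinearMap.exists_linearEquiv_apply_apply_eq_of_finrank_range_eq <|
      LinearMap.finrank_range_eq_of_surjective_of_apply_eq A B φ₁.surjective φ₂.surjective hφ
  · rintro ⟨ψ₁, ψ₂, hψ⟩
    exact ⟨ψ₁.toContinuousLinearEquiv.toHomeomorph, ψ₂.toContinuousLinearEquiv.toHomeomorph, hψ⟩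
end

section
/- Let (A_i)_{i ∈ Fin s} and (B_i)_{i ∈ Fin s} be two finite families of bilinear forms ℂ^n × ℂ^n → ℂ. There exists a homeomorphism φ : ℂ^n → ℂ^n such that A_i(u,v) = B_i(φ u, φ v) for all i ∈ Fin s and all u, v ∈ ℂ^n if and only if there exists a linear bijection ψ : ℂ^n → ℂ^n such that A_i(u,v) = B_i(ψ u, ψ v) for all i ∈ Fin s and all u, v ∈ ℂ^n. -/
/-! The map `T_B : x ↦ (B_i(x, y), B_i(y, x))_{i, y}` is linear, with kernel the common radical
of the `B_i`. If a bijection `φ` carries `A` to `B`, then `T_B ∘ φ` is again linear, namely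
`u ↦ (A_i(u, φ⁻¹ y), A_i(φ⁻¹ y, u))_{i, y}`, and has the same range as `T_B`. Two linear maps
from spaces of equal dimension with equal ranges differ by a linear equivalence `ψ`, so
`T_B ∘ ψ = T_B ∘ φ`: `ψ u - φ u` lies in the radical, and `ψ` carries `A` to `B` as well. -/

open Module LinearMap

/-- Split off the kernels, which have equal dimension by rank–nullity. -/
theorem LinearMap.exists_linearEquiv_comp_eq_of_range_eq_s4 {K V W X : Type*} [Field K]
    [AddCommGroup V] [Module K V] [FiniteDimensional K V]
    [AddCommGroup W] [Module K W] [FiniteDimensional K W]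
    [AddCommGroup X] [Module K X]
    (f : V →ₗ[K] X) (g : W →ₗ[K] X) (hdim : finrank K V = finrank K W)
    (hrange : range f = range g) :
    ∃ ψ : V ≃ₗ[K] W, ∀ v, g (ψ v) = f v := by
  obtain ⟨C, hC⟩ := (ker f).exists_isCompl
  obtain ⟨D, hD⟩ := (ker g).exists_isCompl
  let eV : V ≃ₗ[K] range f × ker f :=
    f.rangeRestrict.equivProdOfSurjectiveOfIsCompl (Submodule.projectionOnto _ C hC)
      f.range_rangeRestrict (Submodule.range_projectionOnto hC)
      (by rwa [ker_rangeRestrict, Submodule.ker_projectionOnto])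
  let eW : W ≃ₗ[K] range g × ker g :=
    g.rangeRestrict.equivProdOfSurjectiveOfIsCompl (Submodule.projectionOnto _ D hD)
      g.range_rangeRestrict (Submodule.range_projectionOnto hD)
      (by rwa [ker_rangeRestrict, Submodule.ker_projectionOnto])
  have hker : finrank K (ker f) = finrank K (ker g) := by
    have hf := f.finrank_range_add_finrank_ker
    have hg := g.finrank_range_add_finrank_ker
    rw [hrange] at hf
    omega
  refine ⟨eV.trans (((LinearEquiv.ofEq _ _ hrange).prodCongr
    (LinearEquiv.ofFinrankEq _ _ hker)).trans eW.symm), fun v => ?_⟩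
  have hg : ∀ w, g w = ((eW w).1 : X) := fun _ => rfl
  rw [hg, LinearEquiv.trans_apply, LinearEquiv.trans_apply, LinearEquiv.apply_symm_apply]
  rfl

section Pairings

variable {K V W ι Y : Type*} [Field K] [AddCommGroup V] [Module K V] [AddCommGroup W] [Module K W]

def pairingsWith (B : ι → V →ₗ[K] V →ₗ[K] K) (σ : Y → V) : V →ₗ[K] ι → Y → K × K :=
  LinearMap.pi fun i => LinearMap.pi fun y => ((B i).flip (σ y)).prod (B i (σ y))

@[simp]
theorem pairingsWith_apply (B : ι → V →ₗ[K] V →ₗ[K] K) (σ : Y → V) (x : V) (i : ι) (y : Y) :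
    pairingsWith B σ x i y = (B i x (σ y), B i (σ y) x) := rfl

theorem pairingsWith_symm_apply {A : ι → V →ₗ[K] V →ₗ[K] K} {B : ι → W →ₗ[K] W →ₗ[K] K}
    {φ : V ≃ W} (h : ∀ i u v, A i u v = B i (φ u) (φ v)) (u : V) :
    pairingsWith A φ.symm u = pairingsWith B id (φ u) := by
  ext i y <;> simp [h]

theorem range_pairingsWith_symm {A : ι → V →ₗ[K] V →ₗ[K] K} {B : ι → W →ₗ[K] W →ₗ[K] K}
    {φ : V ≃ W} (h : ∀ i u v, A i u v = B i (φ u) (φ v)) :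
    range (pairingsWith A φ.symm) = range (pairingsWith B id) := by
  ext x
  constructor
  · rintro ⟨u, rfl⟩
    exact ⟨φ u, (pairingsWith_symm_apply h u).symm⟩
  · rintro ⟨w, rfl⟩
    exact ⟨φ.symm w, by rw [pairingsWith_symm_apply h, φ.apply_symm_apply]⟩

theorem exists_linearEquiv_of_equiv_forall_eq [FiniteDimensional K V] [FiniteDimensional K W]
    {A : ι → V →ₗ[K] V →ₗ[K] K} {B : ι → W →ₗ[K] W →ₗ[K] K} (φ : V ≃ W)
    (hdim : finrank K V = finrank K W) (h : ∀ i u v, A i u v = B i (φ u) (φ v)) :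
    ∃ ψ : V ≃ₗ[K] W, ∀ i u v, A i u v = B i (ψ u) (ψ v) := by
  obtain ⟨ψ, hψ⟩ := exists_linearEquiv_comp_eq_of_range_eq_s4 _ _ hdim (range_pairingsWith_symm h)
  have hψφ (u : V) (i : ι) (y : W) :
      (B i (ψ u) y, B i y (ψ u)) = (B i (φ u) y, B i y (φ u)) := by
    have := congrFun (congrFun (hψ u ▸ pairingsWith_symm_apply h u) i) y
    rwa [pairingsWith_apply, pairingsWith_apply] at this
  refine ⟨ψ, fun i u v => ?_⟩
  calc A i u v = B i (φ u) (φ v) := h i u v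
    _ = B i (ψ u) (φ v) := (congrArg Prod.fst (hψφ u i (φ v))).symm
    _ = B i (ψ u) (ψ v) := (congrArg Prod.snd (hψφ v i (ψ u))).symm

end Pairings

/-- For two finite families `(A_i)`, `(B_i)` of bilinear forms `ℂ^n × ℂ^n → ℂ`:
there is a homeomorphism `φ : ℂ^n → ℂ^n` with `A_i (u, v) = B_i (φ u, φ v)` for all
`i`, `u`, `v` if and only if there is a linear bijection `ψ` with the same property. -/
theorem stmt_4 (n s : ℕ)
    (A B : Fin s → (Fin n → ℂ) →ₗ[ℂ] (Fin n → ℂ) →ₗ[ℂ] ℂ) :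
    (∃ φ : (Fin n → ℂ) ≃ₜ (Fin n → ℂ), ∀ i u v, A i u v = B i (φ u) (φ v)) ↔
    (∃ ψ : (Fin n → ℂ) ≃ₗ[ℂ] (Fin n → ℂ), ∀ i u v, A i u v = B i (ψ u) (ψ v)) := by
  constructor
  · rintro ⟨φ, hφ⟩
    exact exists_linearEquiv_of_equiv_forall_eq φ.toEquiv rfl hφ
  · rintro ⟨ψ, hψ⟩
    exact ⟨ψ.toContinuousLinearEquiv.toHomeomorph, hψ⟩
end

section
/- If φ : ℂ^n → ℂ^n is a homeomorphism, then there exists a basis u₁, …, uₙ of ℂ^n such that φ(u₁), …, φ(uₙ) is also a basis of ℂ^n. Equivalently: there exist vectors u₁, …, uₙ ∈ ℂ^n such that both the family (u₁, …, uₙ) and the family (φ(u₁), …, φ(uₙ)) are linearly independent. -/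
/-!
Invertible matrices are dense (a matrix `M` is a limit of `M + t • 1`, `t → 0`, and only finitely
many `t` are eigenvalues of `-M`), and linearly independent families of `n` vectors in `ℂ^n` are
the rows of invertible matrices; they also form an open set. Applying `φ` coordinatewise is a
homeomorphism of `(ℂ^n)^n`, so the preimage of this open dense set is again dense and meets it.
-/

open Filter Topology

theorem Matrix.dense_setOfPred_isUnit {𝕜 ι : Type*} [NontriviallyNormedField 𝕜] [Fintype ι]
    [DecidableEq ι] : Dense {M : Matrix ι ι 𝕜 | IsUnit M} := by
  intro M
  have hlim : Tendsto (fun t : 𝕜 => algebraMap 𝕜 (Matrix ι ι 𝕜) t + M) (𝓝[≠] 0) (𝓝 M) := by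
    have : Continuous fun t : 𝕜 => algebraMap 𝕜 (Matrix ι ι 𝕜) t + M := by fun_prop
    simpa using (this.tendsto 0).mono_left nhdsWithin_le_nhds
  have hunit : ∀ᶠ t in 𝓝[≠] 0, IsUnit (algebraMap 𝕜 (Matrix ι ι 𝕜) t + M) := by
    filter_upwards [nhdsNE_of_nhdsNE_sdiff_finite univ_mem (-M).finite_spectrum] with t ht
    simpa using spectrum.notMem_iff.mp ht.2
  exact mem_closure_of_tendsto hlim hunit

theorem dense_setOfPred_linearIndependent {𝕜 ι : Type*} [NontriviallyNormedField 𝕜]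
    [Fintype ι] : Dense {u : ι → ι → 𝕜 | LinearIndependent 𝕜 u} := by
  classical
  have h := Matrix.dense_setOfPred_isUnit (𝕜 := 𝕜) (ι := ι)
  simp_rw [← Matrix.linearIndependent_rows_iff_isUnit] at h
  exact h

theorem IsOpenMap.exists_mem_and_apply_mem {X Y : Type*} [TopologicalSpace X]
    [TopologicalSpace Y] [Nonempty X] {f : X → Y} (hf : IsOpenMap f) {s : Set X} {t : Set Y}
    (hso : IsOpen s) (hsd : Dense s) (htd : Dense t) : ∃ x ∈ s, f x ∈ t :=
  (hsd.inter_of_isOpen_left (htd.preimage hf) hso).nonempty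

/-- If `φ : ℂ^n → ℂ^n` is a homeomorphism, then there exist vectors
`u₁, …, uₙ ∈ ℂ^n` such that both `(u₁, …, uₙ)` and `(φ u₁, …, φ uₙ)`
are linearly independent (equivalently, both families are bases of `ℂ^n`). -/
theorem stmt_6 (n : ℕ) (φ : (Fin n → ℂ) ≃ₜ (Fin n → ℂ)) :
    ∃ u : Fin n → (Fin n → ℂ),
      LinearIndependent ℂ u ∧ LinearIndependent ℂ (fun i => φ (u i)) :=
  (Homeomorph.piCongrRight fun _ => φ).isOpenMap.exists_mem_and_apply_mem
    isOpen_setOfPred_linearIndependent dense_setOfPred_linearIndependent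
    dense_setOfPred_linearIndependent
end

section
/- Let φ : ℂ^n → ℂ^n be a homeomorphism and let 1 ≤ k < n. Suppose u₁, …, u_k ∈ ℂ^n are linearly independent and φ(u₁), …, φ(u_k) are also linearly independent. Then there exists a vector u_{k+1} ∈ ℂ^n such that u₁, …, u_k, u_{k+1} are linearly independent and φ(u₁), …, φ(u_k), φ(u_{k+1}) are linearly independent. -/
open Set Submodule

lemma dense_compl_of_ne_top {n : ℕ} (S : Submodule ℂ (Fin n → ℂ)) (hS : S ≠ ⊤) :
    Dense ((S : Set (Fin n → ℂ))ᶜ) ∧ IsOpen ((S : Set (Fin n → ℂ))ᶜ) := by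
  constructor
  · rw [← interior_eq_empty_iff_dense_compl]
    by_contra h
    exact hS (S.eq_top_of_nonempty_interior' (Set.nonempty_iff_ne_empty.2 h))
  · exact (Submodule.closed_of_finiteDimensional S).isOpen_compl

/-- Let `φ : ℂ^n → ℂ^n` be a homeomorphism and `1 ≤ k < n`. If `u₁, …, u_k` are
linearly independent and `φ u₁, …, φ u_k` are linearly independent, then there is a
vector `u_{k+1}` such that `u₁, …, u_k, u_{k+1}` are linearly independent and
`φ u₁, …, φ u_k, φ u_{k+1}` are linearly independent. -/
theorem stmt_7 (n k : ℕ) (hk1 : 1 ≤ k) (hkn : k < n)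
    (φ : (Fin n → ℂ) ≃ₜ (Fin n → ℂ))
    (u : Fin k → (Fin n → ℂ))
    (hu : LinearIndependent ℂ u)
    (hφu : LinearIndependent ℂ (fun i => φ (u i))) :
    ∃ x : Fin n → ℂ,
      LinearIndependent ℂ (Fin.snoc u x) ∧
      LinearIndependent ℂ (Fin.snoc (fun i => φ (u i)) (φ x)) := by
  set S := Submodule.span ℂ (Set.range u)
  set T := Submodule.span ℂ (Set.range (fun i => φ (u i)))
  have hfr : ∀ (v : Fin k → (Fin n → ℂ)), LinearIndependent ℂ v →
      Submodule.span ℂ (Set.range v) ≠ ⊤ := by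
    intro v hv htop
    have h1 : Module.finrank ℂ (Submodule.span ℂ (Set.range v)) = k := by
      rw [finrank_span_eq_card hv, Fintype.card_fin]
    rw [htop, finrank_top, Module.finrank_fintype_fun_eq_card, Fintype.card_fin] at h1
    omega
  obtain ⟨hSd, hSo⟩ := dense_compl_of_ne_top S (hfr u hu)
  obtain ⟨hTd, hTo⟩ := dense_compl_of_ne_top T (hfr _ hφu)
  have hTd' : Dense (φ ⁻¹' (T : Set (Fin n → ℂ))ᶜ) := hTd.preimage φ.isOpenMap
  have hTo' : IsOpen (φ ⁻¹' (T : Set (Fin n → ℂ))ᶜ) := hTo.preimage φ.continuous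
  obtain ⟨x, hx1, hx2⟩ := hSd.inter_open_nonempty _ hTo' hTd'.nonempty
  exact ⟨x, linearIndependent_fin_snoc.2 ⟨hu, hx2⟩,
    linearIndependent_fin_snoc.2 ⟨hφu, hx1⟩⟩
end
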